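/- For every real $T > 0$, $T/\sqrt 2 \le \sigma_1(T) \le T/\sqrt 2 + 5$, where $\sigma_1(T) = \sup_{f \in \mathcal{L}_2(T)} \int_0^T |f'(t)|\, dt$. -/

import Mathlib

/-!
Lower bound: the triangle wave `W` of period `4√2` with slopes `±1` has values in `[-√2, √2]`
and a primitive that oscillates in `[-1, 1]`, so it is an admissible derivative. Its absolute
value is again a triangle wave, of half the period, shifted up by its mean `√2/2`; starting it
at the right phase, the running integral of `|W|` never drops below `t/√2`.

Upper bound: let `g = f'`. On an interval where `g` has no zero, `∫|g| = |f b - f a| ≤ 2`;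
between two zeros at distance `ℓ`, `|g|` lies under a tent of slope `1`, so `∫|g| ≤ ℓ²/4`.
The first bound is `≤ √2ℓ/2` when `ℓ ≥ 2√2`, the second when `ℓ ≤ 2√2`. Cutting the
interval between the first and the last zero of `g` into pieces of these two kinds gives
`√2/2` per unit length, and the two zero-free end pieces add at most `4`.
-/

open Set MeasureTheory intervalIntegral Real

/-- Membership in Landau's class `𝓛₂(T)`. -/
def InL2 (T : ℝ) (f f' : ℝ → ℝ) : Prop :=
  (∀ t ∈ Icc 0 T, HasDerivWithinAt f (f' t) (Icc 0 T) t) ∧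
  (∀ t ∈ Icc 0 T, |f t| ≤ 1) ∧
  LipschitzOnWith 1 f' (Icc 0 T)

/-- `σ₁(T) = sup_{f ∈ 𝓛₂(T)} ∫₀ᵀ |f'(t)| dt`. -/
noncomputable def sigma1 (T : ℝ) : ℝ :=
  sSup {y : ℝ | ∃ f f' : ℝ → ℝ, InL2 T f f' ∧ y = ∫ t in (0:ℝ)..T, |f' t|}

namespace AddCircle

variable {p : ℝ}

theorem norm_coe_of_abs_le (hp : 0 < p) {x : ℝ} (hx : |x| ≤ p / 2) :
    ‖(x : AddCircle p)‖ = |x| :=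
  (norm_coe_eq_abs_iff p hp.ne').2 (by rwa [abs_of_pos hp])

theorem lipschitzWith_norm_coe : LipschitzWith 1 fun x : ℝ => ‖(x : AddCircle p)‖ := by
  refine LipschitzWith.of_dist_le_mul fun x y => ?_
  rw [NNReal.coe_one, one_mul, Real.dist_eq, dist_eq_norm]
  refine (abs_norm_sub_norm_le _ _).trans ?_
  rw [← coe_sub]
  exact QuotientAddGroup.norm_mk_le_norm

theorem norm_coe_add_half_period (hp : 0 < p) (x : ℝ) :
    ‖((x + p / 2 : ℝ) : AddCircle p)‖ = p / 2 - ‖(x : AddCircle p)‖ := by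
  have hper : Function.Periodic
      (fun x : ℝ => ‖((x + p / 2 : ℝ) : AddCircle p)‖ + ‖(x : AddCircle p)‖) p := fun x => by
    simp only [add_right_comm x p, coe_add_period]
  obtain ⟨y, ⟨hy₁, hy₂⟩, hxy⟩ := hper.exists_mem_Ico hp x (-(p / 2))
  rw [eq_sub_iff_add_eq, hxy]
  rcases le_total y 0 with hy | hy
  · rw [norm_coe_of_abs_le hp (abs_le.2 ⟨by linarith, by linarith⟩),
      norm_coe_of_abs_le hp (abs_le.2 ⟨by linarith, by linarith⟩),
      abs_of_nonneg (by linarith), abs_of_nonpos hy]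
    ring
  · rw [show y + p / 2 = (y - p / 2) + p by ring, coe_add_period,
      norm_coe_of_abs_le hp (abs_le.2 ⟨by linarith, by linarith⟩),
      norm_coe_of_abs_le hp (abs_le.2 ⟨by linarith, by linarith⟩),
      abs_of_nonpos (by linarith), abs_of_nonneg hy]
    ring

end AddCircle

noncomputable def triangleWave (p x : ℝ) : ℝ := p / 4 - ‖(x : AddCircle p)‖

noncomputable def triangleWaveIntegral (p x : ℝ) : ℝ := ∫ s in (0 : ℝ)..x, triangleWave p s

section TriangleWave

variable {p : ℝ}

theorem lipschitzWith_triangleWave : LipschitzWith 1 (triangleWave p) := by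
  refine LipschitzWith.of_dist_le_mul fun x y => ?_
  rw [triangleWave, triangleWave, dist_sub_left]
  exact AddCircle.lipschitzWith_norm_coe.dist_le_mul x y

theorem continuous_triangleWave : Continuous (triangleWave p) :=
  lipschitzWith_triangleWave.continuous

theorem triangleWave_periodic : Function.Periodic (triangleWave p) p := fun x => by
  simp [triangleWave]

theorem triangleWave_of_abs_le (hp : 0 < p) {x : ℝ} (hx : |x| ≤ p / 2) :
    triangleWave p x = p / 4 - |x| := by
  rw [triangleWave, AddCircle.norm_coe_of_abs_le hp hx]

theorem triangleWave_add_half_period (hp : 0 < p) (x : ℝ) :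
    triangleWave p (x + p / 2) = -triangleWave p x := by
  rw [triangleWave, triangleWave, AddCircle.norm_coe_add_half_period hp]
  ring

theorem abs_triangleWave (hp : 0 < p) (x : ℝ) :
    |triangleWave p x| = triangleWave (p / 2) x + p / 8 := by
  have hper : Function.Periodic (fun x => |triangleWave p x| - triangleWave (p / 2) x) (p / 2) :=
    fun x => by
      simp only [triangleWave_add_half_period hp, abs_neg, triangleWave_periodic x]
  obtain ⟨y, ⟨hy₁, hy₂⟩, hxy⟩ := hper.exists_mem_Ico (by positivity) x (-(p / 4))
  have hy : |y| ≤ p / 4 := abs_le.2 ⟨by linarith, by linarith⟩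
  rw [← sub_eq_iff_eq_add', hxy, triangleWave_of_abs_le hp (by linarith),
    triangleWave_of_abs_le (by positivity) (by linarith), abs_of_nonneg (by linarith)]
  ring

theorem hasDerivAt_triangleWaveIntegral (x : ℝ) :
    HasDerivAt (triangleWaveIntegral p) (triangleWave p x) x :=
  (continuous_triangleWave.integral_hasStrictDerivAt 0 x).hasDerivAt

theorem integral_triangleWave (a b : ℝ) :
    ∫ x in a..b, triangleWave p x = triangleWaveIntegral p b - triangleWaveIntegral p a :=
  (integral_interval_sub_left (continuous_triangleWave.intervalIntegrable _ _)
    (continuous_triangleWave.intervalIntegrable _ _)).symm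

theorem triangleWaveIntegral_of_mem_Icc (hp : 0 < p) {x : ℝ} (hx : x ∈ Icc 0 (p / 2)) :
    triangleWaveIntegral p x = x * (p / 2 - x) / 2 := by
  have hwave : EqOn (triangleWave p) (fun s => p / 4 - s) (uIcc 0 x) := fun s hs => by
    rw [uIcc_of_le hx.1] at hs
    rw [triangleWave_of_abs_le hp (by rw [abs_of_nonneg hs.1]; exact hs.2.trans hx.2),
      abs_of_nonneg hs.1]
  rw [triangleWaveIntegral, integral_congr hwave, integral_sub intervalIntegrable_const
    intervalIntegrable_id, intervalIntegral.integral_const, integral_id]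
  simp only [smul_eq_mul]
  ring

theorem triangleWaveIntegral_add_half_period (hp : 0 < p) (x : ℝ) :
    triangleWaveIntegral p (x + p / 2) = -triangleWaveIntegral p x := by
  have hhalf : triangleWaveIntegral p (p / 2) = 0 := by
    rw [triangleWaveIntegral_of_mem_Icc hp ⟨by positivity, le_rfl⟩]
    ring
  calc triangleWaveIntegral p (x + p / 2)
      = triangleWaveIntegral p (x + p / 2) - triangleWaveIntegral p (p / 2) := by
        rw [hhalf, sub_zero]
    _ = ∫ s in p / 2..x + p / 2, triangleWave p s := (integral_triangleWave _ _).symm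
    _ = ∫ s in (0 : ℝ)..x, triangleWave p (s + p / 2) := by rw [integral_comp_add_right, zero_add]
    _ = -triangleWaveIntegral p x := by
        simp only [triangleWave_add_half_period hp, intervalIntegral.integral_neg,
          triangleWaveIntegral]

theorem abs_triangleWaveIntegral_le (hp : 0 < p) (x : ℝ) :
    |triangleWaveIntegral p x| ≤ p ^ 2 / 32 := by
  have hper : Function.Periodic (fun x => |triangleWaveIntegral p x|) (p / 2) := fun x => by
    simp only [triangleWaveIntegral_add_half_period hp, abs_neg]
  obtain ⟨y, hy, hxy⟩ := hper.exists_mem_Ico₀ (by positivity) x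
  rw [hxy, triangleWaveIntegral_of_mem_Icc hp (Ico_subset_Icc_self hy),
    abs_of_nonneg (by nlinarith [hy.1, hy.2])]
  nlinarith [sq_nonneg (y - p / 4)]

theorem integral_abs_triangleWave (hp : 0 < p) (a b : ℝ) :
    ∫ x in a..b, |triangleWave p x| =
      triangleWaveIntegral (p / 2) b - triangleWaveIntegral (p / 2) a + p / 8 * (b - a) := by
  simp only [abs_triangleWave hp]
  rw [integral_add (continuous_triangleWave.intervalIntegrable _ _) intervalIntegrable_const,
    integral_triangleWave, intervalIntegral.integral_const, smul_eq_mul]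
  ring

theorem le_integral_abs_triangleWave (hp : 0 < p) (T : ℝ) :
    p / 8 * T ≤ ∫ t in (0 : ℝ)..T, |triangleWave p (t - p / 8)| := by
  -- the phase `p / 8` starts the wave at a minimum of the primitive of `|triangleWave p| - p / 8`
  have hmin : triangleWaveIntegral (p / 2) (-(p / 8)) = -(p / 2) ^ 2 / 32 := by
    have := triangleWaveIntegral_add_half_period (half_pos hp) (-(p / 8))
    rw [triangleWaveIntegral_of_mem_Icc (half_pos hp) ⟨by linarith, by linarith⟩] at this
    linarith
  rw [integral_comp_sub_right (fun x => |triangleWave p x|), integral_abs_triangleWave hp,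
    zero_sub, hmin]
  nlinarith [abs_le.1 (abs_triangleWaveIntegral_le (half_pos hp) (T - p / 8))]

end TriangleWave

theorem inL2_triangleWaveIntegral {p : ℝ} (hp : 0 < p) (hp32 : p ^ 2 ≤ 32) (T c : ℝ) :
    InL2 T (fun t => triangleWaveIntegral p (t - c)) (fun t => triangleWave p (t - c)) := by
  refine ⟨fun t _ => ?_, fun t _ => ?_, ?_⟩
  · exact ((hasDerivAt_triangleWaveIntegral (t - c)).comp_sub_const t c).hasDerivWithinAt
  · exact (abs_triangleWaveIntegral_le hp _).trans (by linarith)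
  · refine LipschitzWith.lipschitzOnWith (LipschitzWith.of_dist_le_mul fun x y => ?_)
    simpa only [dist_sub_right] using lipschitzWith_triangleWave.dist_le_mul (x - c) (y - c)

theorem ContinuousOn.nonneg_or_nonpos_of_ne_zero {g : ℝ → ℝ} {a b : ℝ}
    (hg : ContinuousOn g (Icc a b)) (h : ∀ t ∈ Ioo a b, g t ≠ 0) :
    (∀ t ∈ Icc a b, 0 ≤ g t) ∨ ∀ t ∈ Icc a b, g t ≤ 0 := by
  by_contra! ⟨⟨s, hs, hgs⟩, t, ht, hgt⟩
  obtain ⟨z, hz, hgz⟩ : 0 ∈ g '' uIcc s t :=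
    intermediate_value_uIcc (hg.mono (uIcc_subset_Icc hs ht)) (mem_uIcc.2 (.inl ⟨hgs.le, hgt.le⟩))
  have hzs : z ≠ s := by rintro rfl; exact hgs.ne hgz
  have hzt : z ≠ t := by rintro rfl; exact hgt.ne' hgz
  refine h z ?_ hgz
  rcases mem_uIcc.1 hz with ⟨h₁, h₂⟩ | ⟨h₁, h₂⟩
  · exact ⟨hs.1.trans_lt (h₁.lt_of_ne' hzs), (h₂.lt_of_ne hzt).trans_le ht.2⟩
  · exact ⟨ht.1.trans_lt (h₁.lt_of_ne' hzt), (h₂.lt_of_ne hzs).trans_le hs.2⟩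

theorem integral_abs_eq_abs_integral_of_ne_zero {g : ℝ → ℝ} {a b : ℝ} (hab : a ≤ b)
    (hg : ContinuousOn g (Icc a b)) (h : ∀ t ∈ Ioo a b, g t ≠ 0) :
    ∫ t in a..b, |g t| = |∫ t in a..b, g t| := by
  rcases hg.nonneg_or_nonpos_of_ne_zero h with hpos | hneg
  · rw [integral_congr fun t ht => abs_of_nonneg (hpos t (uIcc_of_le hab ▸ ht)),
      abs_of_nonneg (integral_nonneg hab hpos)]
  · rw [integral_congr fun t ht => abs_of_nonpos (hneg t (uIcc_of_le hab ▸ ht)),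
      intervalIntegral.integral_neg, abs_of_nonpos (neg_nonneg.1 ?_)]
    rw [← intervalIntegral.integral_neg]
    exact integral_nonneg hab fun t ht => neg_nonneg.2 (hneg t ht)

theorem integral_abs_le_of_lipschitzOnWith {g : ℝ → ℝ} {a b : ℝ} (hab : a ≤ b)
    (hg : LipschitzOnWith 1 g (Icc a b)) (ha : g a = 0) (hb : g b = 0) :
    ∫ t in a..b, |g t| ≤ (b - a) ^ 2 / 4 := by
  have hdist : ∀ s ∈ Icc a b, g s = 0 → ∀ t ∈ Icc a b, |g t| ≤ |t - s| :=
    fun s hs hgs t ht => by simpa [Real.dist_eq, hgs] using hg.dist_le_mul t ht s hs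
  have hint : ∀ {u v}, u ∈ Icc a b → v ∈ Icc a b →
      IntervalIntegrable (fun t => |g t|) volume u v :=
    fun hu hv => (hg.continuousOn.abs.mono (uIcc_subset_Icc hu hv)).intervalIntegrable
  have hm : (a + b) / 2 ∈ Icc a b := ⟨by linarith, by linarith⟩
  have hleft : ∫ t in a..(a + b) / 2, |g t| ≤ ∫ t in a..(a + b) / 2, (t - a) :=
    integral_mono_on (by linarith) (hint (left_mem_Icc.2 hab) hm)
      ((continuous_sub_right a).intervalIntegrable _ _) fun t ht => by
        simpa [abs_of_nonneg (sub_nonneg.2 ht.1)] using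
          hdist a ⟨le_rfl, hab⟩ ha t ⟨ht.1, by linarith [ht.2]⟩
  have hright : ∫ t in (a + b) / 2..b, |g t| ≤ ∫ t in (a + b) / 2..b, (b - t) :=
    integral_mono_on (by linarith) (hint hm (right_mem_Icc.2 hab))
      ((continuous_sub_left b).intervalIntegrable _ _) fun t ht => by
        simpa [abs_of_nonpos (sub_nonpos.2 ht.2)] using
          hdist b ⟨hab, le_rfl⟩ hb t ⟨by linarith [ht.1], ht.2⟩
  rw [← integral_add_adjacent_intervals (b := (a + b) / 2) (hint (left_mem_Icc.2 hab) hm)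
    (hint hm (right_mem_Icc.2 hab))]
  simp only [intervalIntegral.integral_sub intervalIntegrable_id intervalIntegrable_const,
    intervalIntegral.integral_sub intervalIntegrable_const intervalIntegrable_id, integral_id,
    intervalIntegral.integral_const, smul_eq_mul] at hleft hright
  linarith

theorem ContinuousOn.isCompact_Icc_inter_preimage {g : ℝ → ℝ} {a b : ℝ}
    (hg : ContinuousOn g (Icc a b)) {s : Set ℝ} (hs : IsClosed s) :
    IsCompact (Icc a b ∩ g ⁻¹' s) :=
  isCompact_Icc.of_isClosed_subset (hg.preimage_isClosed_of_isClosed isClosed_Icc hs)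
    inter_subset_left

theorem ContinuousOn.exists_zero_free_gap {g : ℝ → ℝ} {a b c : ℝ}
    (hg : ContinuousOn g (Icc a b)) (hac : a ≤ c) (hcb : c ≤ b) (ha : g a = 0) (hb : g b = 0) :
    ∃ γ ∈ Icc a c, ∃ δ ∈ Icc c b, g γ = 0 ∧ g δ = 0 ∧ ∀ t ∈ Ioo γ δ, g t ≠ 0 := by
  have hleft := (hg.mono (Icc_subset_Icc le_rfl hcb)).isCompact_Icc_inter_preimage
    (isClosed_singleton (x := 0))
  have hright := (hg.mono (Icc_subset_Icc hac le_rfl)).isCompact_Icc_inter_preimage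
    (isClosed_singleton (x := 0))
  obtain ⟨γ, ⟨hγ, hgγ⟩, hγmax⟩ := hleft.exists_isGreatest ⟨a, ⟨le_rfl, hac⟩, ha⟩
  obtain ⟨δ, ⟨hδ, hgδ⟩, hδmin⟩ := hright.exists_isLeast ⟨b, ⟨hcb, le_rfl⟩, hb⟩
  refine ⟨γ, hγ, δ, hδ, hgγ, hgδ, fun t ht hgt => ?_⟩
  rcases le_total t c with htc | htc
  · exact (hγmax ⟨⟨hγ.1.trans ht.1.le, htc⟩, hgt⟩).not_gt ht.1
  · exact (hδmin ⟨⟨htc, ht.2.le.trans hδ.2⟩, hgt⟩).not_gt ht.2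

namespace InL2

variable {T : ℝ} {f g : ℝ → ℝ} {a b : ℝ}

theorem intervalIntegrable_abs (hf : InL2 T f g) (ha : a ∈ Icc 0 T) (hb : b ∈ Icc 0 T) :
    IntervalIntegrable (fun t => |g t|) volume a b :=
  (hf.2.2.continuousOn.abs.mono (uIcc_subset_Icc ha hb)).intervalIntegrable

theorem integral_abs_add_adjacent_intervals (hf : InL2 T f g) {c : ℝ} (ha : a ∈ Icc 0 T)
    (hb : b ∈ Icc 0 T) (hc : c ∈ Icc 0 T) :
    (∫ t in a..b, |g t|) + ∫ t in b..c, |g t| = ∫ t in a..c, |g t| :=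
  integral_add_adjacent_intervals (hf.intervalIntegrable_abs ha hb)
    (hf.intervalIntegrable_abs hb hc)

theorem integral_eq_sub (hf : InL2 T f g) (ha : 0 ≤ a) (hab : a ≤ b) (hb : b ≤ T) :
    ∫ t in a..b, g t = f b - f a := by
  have hsub : Icc a b ⊆ Icc 0 T := Icc_subset_Icc ha hb
  refine integral_eq_sub_of_hasDerivAt_of_le hab
    (fun t ht => (hf.1 t (hsub ht)).continuousWithinAt.mono hsub) (fun t ht => ?_)
    ((hf.2.2.continuousOn.mono hsub).intervalIntegrable_of_Icc hab)
  exact (hf.1 t (hsub (Ioo_subset_Icc_self ht))).hasDerivAt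
    (Icc_mem_nhds (ha.trans_lt ht.1) (ht.2.trans_le hb))

theorem integral_abs_le_two (hf : InL2 T f g) (ha : 0 ≤ a) (hab : a ≤ b) (hb : b ≤ T)
    (hg : ∀ t ∈ Ioo a b, g t ≠ 0) : ∫ t in a..b, |g t| ≤ 2 := by
  have hsub : Icc a b ⊆ Icc 0 T := Icc_subset_Icc ha hb
  rw [integral_abs_eq_abs_integral_of_ne_zero hab (hf.2.2.continuousOn.mono hsub) hg,
    hf.integral_eq_sub ha hab hb]
  have hfa := abs_le.1 (hf.2.1 a (hsub (left_mem_Icc.2 hab)))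
  have hfb := abs_le.1 (hf.2.1 b (hsub (right_mem_Icc.2 hab)))
  exact abs_le.2 ⟨by linarith, by linarith⟩

theorem integral_abs_le_of_zeros_of_le (hf : InL2 T f g) (ha : 0 ≤ a) (hab : a ≤ b)
    (hb : b ≤ T) (hga : g a = 0) (hgb : g b = 0) (hlen : b - a ≤ 2 * √2) :
    ∫ t in a..b, |g t| ≤ √2 * (b - a) / 2 :=
  (integral_abs_le_of_lipschitzOnWith hab (hf.2.2.mono (Icc_subset_Icc ha hb)) hga hgb).trans
    (by nlinarith [mul_nonneg (sub_nonneg.2 hab) (sub_nonneg.2 hlen)])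

theorem integral_abs_le_of_zeros_of_ne_zero (hf : InL2 T f g) (ha : 0 ≤ a) (hab : a ≤ b)
    (hb : b ≤ T) (hga : g a = 0) (hgb : g b = 0) (hg : ∀ t ∈ Ioo a b, g t ≠ 0) :
    ∫ t in a..b, |g t| ≤ √2 * (b - a) / 2 := by
  rcases le_total (b - a) (2 * √2) with hlen | hlen
  · exact hf.integral_abs_le_of_zeros_of_le ha hab hb hga hgb hlen
  · refine (hf.integral_abs_le_two ha hab hb hg).trans ?_
    nlinarith [Real.mul_self_sqrt (zero_le_two : (0 : ℝ) ≤ 2), Real.sqrt_nonneg 2]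

theorem integral_abs_le_of_zeros (hf : InL2 T f g) (ha : 0 ≤ a) (hab : a ≤ b) (hb : b ≤ T)
    (hga : g a = 0) (hgb : g b = 0) : ∫ t in a..b, |g t| ≤ √2 * (b - a) / 2 := by
  have hpos : 0 < 2 * √2 := by positivity
  obtain ⟨n, hn⟩ := exists_nat_ge ((b - a) / (2 * √2))
  rw [div_le_iff₀ hpos] at hn
  induction n generalizing a with
  | zero =>
    rw [Nat.cast_zero, zero_mul] at hn
    exact hf.integral_abs_le_of_zeros_of_le ha hab hb hga hgb (by linarith)
  | succ n ih =>
    rcases le_total (b - a) (2 * √2) with hlen | hlen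
    · exact hf.integral_abs_le_of_zeros_of_le ha hab hb hga hgb hlen
    obtain ⟨γ, hγ, δ, hδ, hgγ, hgδ, hgap⟩ := (hf.2.2.continuousOn.mono
      (Icc_subset_Icc ha hb)).exists_zero_free_gap (c := a + 2 * √2) (by linarith) (by linarith)
      hga hgb
    have h₁ := hf.integral_abs_le_of_zeros_of_le ha hγ.1 (by linarith [hγ.2]) hga hgγ
      (by linarith [hγ.2])
    have h₂ := hf.integral_abs_le_of_zeros_of_ne_zero (ha.trans hγ.1) (hγ.2.trans hδ.1)
      (hδ.2.trans hb) hgγ hgδ hgap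
    have h₃ := ih (ha.trans (hγ.1.trans (hγ.2.trans hδ.1))) hδ.2 hgδ
      (by push_cast at hn; linarith [hδ.1])
    have hmem : ∀ {x}, x ∈ Icc a b → x ∈ Icc 0 T := fun hx => Icc_subset_Icc ha hb hx
    have hγ' := hmem ⟨hγ.1, by linarith [hγ.2]⟩
    have hδ' := hmem ⟨by linarith [hδ.1], hδ.2⟩
    rw [← hf.integral_abs_add_adjacent_intervals (hmem (left_mem_Icc.2 hab)) hγ'
        (hmem (right_mem_Icc.2 hab)),
      ← hf.integral_abs_add_adjacent_intervals hγ' hδ' (hmem (right_mem_Icc.2 hab))]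
    linarith

theorem integral_abs_le (hf : InL2 T f g) (hT : 0 ≤ T) :
    ∫ t in (0 : ℝ)..T, |g t| ≤ √2 * T / 2 + 4 := by
  by_cases hnone : ∀ t ∈ Icc 0 T, g t ≠ 0
  · have := hf.integral_abs_le_two le_rfl hT le_rfl fun t ht => hnone t (Ioo_subset_Icc_self ht)
    nlinarith [Real.sqrt_nonneg 2]
  push Not at hnone
  have hK := hf.2.2.continuousOn.isCompact_Icc_inter_preimage (isClosed_singleton (x := 0))
  obtain ⟨s, ⟨hs, hgs⟩, hsmin⟩ := hK.exists_isLeast hnone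
  obtain ⟨e, ⟨he, hge⟩, hemax⟩ := hK.exists_isGreatest hnone
  have hse : s ≤ e := hsmin ⟨he, hge⟩
  have h₁ : ∫ t in (0 : ℝ)..s, |g t| ≤ 2 := hf.integral_abs_le_two le_rfl hs.1 hs.2
    fun t ht hgt => (hsmin ⟨⟨ht.1.le, ht.2.le.trans hs.2⟩, hgt⟩).not_gt ht.2
  have h₂ := hf.integral_abs_le_of_zeros hs.1 hse he.2 hgs hge
  have h₃ : ∫ t in e..T, |g t| ≤ 2 := hf.integral_abs_le_two he.1 he.2 le_rfl
    fun t ht hgt => (hemax ⟨⟨he.1.trans ht.1.le, ht.2.le⟩, hgt⟩).not_gt ht.1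
  rw [← hf.integral_abs_add_adjacent_intervals (left_mem_Icc.2 hT) hs (right_mem_Icc.2 hT),
    ← hf.integral_abs_add_adjacent_intervals hs he (right_mem_Icc.2 hT)]
  nlinarith [Real.sqrt_nonneg 2, hs.1, he.2]

end InL2

/-- For every `T > 0`, `T/√2 ≤ σ₁(T) ≤ T/√2 + 5`. -/
theorem sigma1_asymptotics (T : ℝ) (hT : 0 < T) :
    T / Real.sqrt 2 ≤ sigma1 T ∧ sigma1 T ≤ T / Real.sqrt 2 + 5 := by
  have hbdd : BddAbove {y : ℝ | ∃ f f' : ℝ → ℝ, InL2 T f f' ∧ y = ∫ t in (0:ℝ)..T, |f' t|} :=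
    ⟨√2 * T / 2 + 4, by rintro _ ⟨f, g, hfg, rfl⟩; exact hfg.integral_abs_le hT.le⟩
  have hp : (0 : ℝ) < 4 * √2 := by positivity
  have hsq : (4 * √2) ^ 2 = 32 := by rw [mul_pow, Real.sq_sqrt zero_le_two]; norm_num
  have hmem := inL2_triangleWaveIntegral hp hsq.le T (4 * √2 / 8)
  have hT2 : T / √2 = 4 * √2 / 8 * T := by
    field_simp
    rw [Real.sq_sqrt zero_le_two]; ring
  constructor
  · rw [hT2]
    exact (le_integral_abs_triangleWave hp T).trans (le_csSup hbdd ⟨_, _, hmem, rfl⟩)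
  · refine csSup_le ⟨_, _, _, hmem, rfl⟩ ?_
    rintro _ ⟨f, g, hfg, rfl⟩
    have := hfg.integral_abs_le hT.le
    rw [hT2]
    linarith
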